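/- Let A, C be bounded self-adjoint operators on Hilbert spaces H_A, H_C, B ∈ B(H_C, H_A), X ∈ B(H_A, H_C) a solution of X A - C X + X B X = B*, Z = A + B X, Λ = (I + X*X)^{1/2} Z (I + X*X)^{-1/2}, and γ ∈ ℝ. Then ‖X (Z - γ I)‖ ≤ ‖X‖ · ‖Λ - γ I‖. -/

import Mathlib

/-! `S = (I + X*X)^{1/2}` satisfies `‖S v‖² = ‖v‖² + ‖X v‖²`, whence `‖S‖ ≤ √(1 + ‖X‖²)` and
`‖X S⁻¹‖ ≤ ‖X‖ / √(1 + ‖X‖²)`. Since `Z - γ = S⁻¹ (Λ - γ) S`, the operator `X (Z - γ)` factors as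
`(X S⁻¹) (Λ - γ) S`, and the two factors `√(1 + ‖X‖²)` cancel. -/

open ContinuousLinearMap

theorem ContinuousLinearMap.norm_sq_apply_eq_of_comp_self_eq {𝕜 E F : Type*} [RCLike 𝕜]
    [NormedAddCommGroup E] [InnerProductSpace 𝕜 E] [CompleteSpace E]
    [NormedAddCommGroup F] [InnerProductSpace 𝕜 F] [CompleteSpace F]
    {S : E →L[𝕜] E} {X : E →L[𝕜] F} (hS : IsSelfAdjoint S) (h : S ∘L S = 1 + adjoint X ∘L X)
    (v : E) : ‖S v‖ ^ 2 = ‖v‖ ^ 2 + ‖X v‖ ^ 2 := by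
  rw [apply_norm_sq_eq_inner_adjoint_left, hS.adjoint_eq, h, apply_norm_sq_eq_inner_adjoint_left,
    add_apply, one_apply_eq_self, inner_add_left, map_add, inner_self_eq_norm_sq]

section NormSqIdentity

variable {𝕜 E F : Type*} [NontriviallyNormedField 𝕜]
  [NormedAddCommGroup E] [NormedSpace 𝕜 E] [NormedAddCommGroup F] [NormedSpace 𝕜 F]
  {S : E →L[𝕜] E} {X : E →L[𝕜] F}

theorem ContinuousLinearMap.opNorm_le_sqrt_one_add_sq_of_norm_sq_apply
    (hS : ∀ v, ‖S v‖ ^ 2 = ‖v‖ ^ 2 + ‖X v‖ ^ 2) : ‖S‖ ≤ √(1 + ‖X‖ ^ 2) := by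
  refine opNorm_le_bound _ (by positivity) fun u ↦ ?_
  rw [← pow_le_pow_iff_left₀ (norm_nonneg _) (by positivity) two_ne_zero, mul_pow,
    Real.sq_sqrt (by positivity), hS]
  nlinarith [X.le_opNorm u, norm_nonneg (X u), norm_nonneg u]

theorem ContinuousLinearMap.opNorm_comp_le_div_sqrt_one_add_sq_of_norm_sq_apply
    (hS : ∀ v, ‖S v‖ ^ 2 = ‖v‖ ^ 2 + ‖X v‖ ^ 2) {Sinv : E →L[𝕜] E} (hSinv : S ∘L Sinv = 1) :
    ‖X ∘L Sinv‖ ≤ ‖X‖ / √(1 + ‖X‖ ^ 2) := by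
  have hc : 0 < √(1 + ‖X‖ ^ 2) := Real.sqrt_pos.2 (by positivity)
  refine opNorm_le_bound _ (by positivity) fun w ↦ ?_
  rw [comp_apply]
  set v := Sinv w
  have hw : S v = w := by simpa using congr($hSinv w)
  rw [div_mul_eq_mul_div, le_div_iff₀ hc, ← hw,
    ← pow_le_pow_iff_left₀ (by positivity) (by positivity) two_ne_zero, mul_pow, mul_pow,
    Real.sq_sqrt (by positivity), hS]
  nlinarith [X.le_opNorm v, norm_nonneg (X v), norm_nonneg v]

end NormSqIdentity

theorem mul_sub_smul_one_mul_of_mul_eq_one {𝕜 R : Type*} [CommSemiring 𝕜] [Ring R] [Algebra 𝕜 R]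
    {s t : R} (h : t * s = 1) (z : R) (c : 𝕜) : t * (s * z * t - c • 1) * s = z - c • 1 := by
  rw [mul_sub, sub_mul, mul_smul_comm, smul_mul_assoc, mul_one, h, ← mul_assoc, ← mul_assoc, h,
    one_mul, mul_assoc, h, mul_one]

theorem norm_X_comp_Z_sub_gamma
    {HA HC : Type*} [NormedAddCommGroup HA] [InnerProductSpace ℂ HA] [CompleteSpace HA]
    [NormedAddCommGroup HC] [InnerProductSpace ℂ HC] [CompleteSpace HC]
    (X : HA →L[ℂ] HC)
    (S : HA →L[ℂ] HA) (hSpos : S.IsPositive)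
    (hSsq : S ∘L S = 1 + ContinuousLinearMap.adjoint X ∘L X)
    (Sinv : HA →L[ℂ] HA) (hSinv : S ∘L Sinv = 1) (hSinv' : Sinv ∘L S = 1)
    (Z : HA →L[ℂ] HA)
    (Lam : HA →L[ℂ] HA) (hLam : Lam = S ∘L Z ∘L Sinv)
    (γ : ℝ) :
    ‖X ∘L (Z - (γ : ℂ) • 1)‖ ≤ ‖X‖ * ‖Lam - (γ : ℂ) • 1‖ := by
  have hfactor : X ∘L (Z - (γ : ℂ) • 1) = (X ∘L Sinv) ∘L (Lam - (γ : ℂ) • 1) ∘L S := by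
    rw [hLam, ← mul_sub_smul_one_mul_of_mul_eq_one hSinv' Z (γ : ℂ)]
    rfl
  have hS := norm_sq_apply_eq_of_comp_self_eq hSpos.isSelfAdjoint hSsq
  calc ‖X ∘L (Z - (γ : ℂ) • 1)‖
      ≤ ‖X ∘L Sinv‖ * ‖Lam - (γ : ℂ) • 1‖ * ‖S‖ := by
        rw [hfactor, mul_assoc]
        exact (opNorm_comp_le _ _).trans (by gcongr; exact opNorm_comp_le _ _)
    _ ≤ ‖X‖ / √(1 + ‖X‖ ^ 2) * ‖Lam - (γ : ℂ) • 1‖ * √(1 + ‖X‖ ^ 2) := by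
        gcongr
        · exact opNorm_comp_le_div_sqrt_one_add_sq_of_norm_sq_apply hS hSinv
        · exact opNorm_le_sqrt_one_add_sq_of_norm_sq_apply hS
    _ = ‖X‖ * ‖Lam - (γ : ℂ) • 1‖ := by field_simp
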